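/- A dominated option o with respect to a preference set R becomes Pareto-optimal with respect to R ∪ {r} (for a new preference r on a fresh attribute) if and only if o is strictly preferred under r to every option in its dominating set O^>_R(o) and not strictly worse under r than any option in its equal set O^=_R(o). -/
import Mathlib


/-- Pareto-dominance: `o` is Pareto-dominated by `o'` w.r.t. the preference set `R`. -/
def ParetoDom {O : Type*} (R : Set (O → O → Prop)) (o o' : O) : Prop :=
  (∀ r ∈ R, r o o') ∧ ∃ r ∈ R, r o o' ∧ ¬ r o' o

/-- `o` is Pareto-optimal w.r.t. `R` iff no option dominates it. -/
def ParetoOptimal {O : Type*} (R : Set (O → O → Prop)) (o : O) : Prop :=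
  ∀ o' : O, ¬ ParetoDom R o o'

/-- A dominated option `o` w.r.t. `R` becomes Pareto-optimal w.r.t. `R ∪ {r}`
iff `o` is strictly better under `r` than every option in its dominating set and
not strictly worse under `r` than any option in its equal set. -/
theorem stmt1 {O : Type*} [Fintype O] (R : Set (O → O → Prop)) (r : O → O → Prop)
    (hr_total : ∀ a b, r a b ∨ r b a) (hr_refl : Reflexive r) (hr_trans : Transitive r)
    (hR : ∀ s ∈ R, Reflexive s ∧ Transitive s ∧ ∀ a b, s a b ∨ s b a)
    (o : O) (hdominated : ∃ o', ParetoDom R o o') (hnew : r ∉ R) :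
    ParetoOptimal (insert r R) o ↔
      ((∀ o', ParetoDom R o o' → (r o' o ∧ ¬ r o o')) ∧
       (∀ o', (∀ s ∈ R, s o o' ∧ s o' o) → ¬ (r o o' ∧ ¬ r o' o))) := by
  constructor
  · intro hopt
    constructor
    · intro o' hdom
      have hnr : ¬ r o o' := by
        intro hro
        exact hopt o' ⟨fun s hs => hs.elim (fun h => h ▸ hro) (hdom.1 s),
          hdom.2.imp fun s hs => ⟨Or.inr hs.1, hs.2⟩⟩
      exact ⟨(hr_total o o').resolve_left hnr, hnr⟩
    · intro o' heq ⟨hro, hnro⟩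
      exact hopt o' ⟨fun s hs => hs.elim (fun h => h ▸ hro) (fun h => (heq s h).1),
        ⟨r, Or.inl rfl, hro, hnro⟩⟩
  · rintro ⟨h1, h2⟩ o' ⟨hall, s, hs, hsoo', hns⟩
    have hro : r o o' := hall r (Or.inl rfl)
    by_cases hstr : ∃ s ∈ R, ¬ s o' o
    · obtain ⟨t, htR, ht⟩ := hstr
      exact (h1 o' ⟨fun u hu => hall u (Or.inr hu), t, htR, hall t (Or.inr htR), ht⟩).2 hro
    · push_neg at hstr
      have heq : ∀ u ∈ R, u o o' ∧ u o' o := fun u hu => ⟨hall u (Or.inr hu), hstr u hu⟩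
      rcases hs with h | h
      · exact h2 o' heq ⟨hro, h ▸ hns⟩
      · exact hns (hstr s h)
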